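/- arXiv:1210.0923 — 6 statements merged into one kernel-verified Lean document; each statement's English description precedes it below -/
import Mathlib

section
/- Let v > k ≥ 1 with 2k ≤ v and k dividing C(v,2). Then μ(1,k,v) = v − 1: there exists a multiset of k-subsets of a v-set in which the v points have frequencies exactly 0, 1, ..., v−1, and no 1-adesign can have maximum point frequency less than v − 1. -/
open Finset

/-- Frequency of a subset `T` in a multiset of blocks `A`: total multiplicity of
blocks containing `T`. -/
def freq (A : Multiset (Finset ℕ)) (T : Finset ℕ) : ℕ :=
  Multiset.card (A.filter (fun K => T ⊆ K))

/-- A `t`-adesign `A(t,k,v)`: a multiset of `k`-subsets of `{0,...,v-1}` in which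
all `t`-subsets have pairwise distinct frequencies. -/
def IsAdesign (t k v : ℕ) (A : Multiset (Finset ℕ)) : Prop :=
  (∀ K ∈ A, K ⊆ Finset.range v ∧ K.card = k) ∧
  ∀ T₁ ∈ (Finset.range v).powersetCard t, ∀ T₂ ∈ (Finset.range v).powersetCard t,
    freq A T₁ = freq A T₂ → T₁ = T₂

/-- `mu t k v`: the smallest possible maximum `t`-subset frequency over all
`t`-adesigns `A(t,k,v)`. -/
noncomputable def mu (t k v : ℕ) : ℕ :=
  sInf {m | ∃ A, IsAdesign t k v A ∧ ∀ T ∈ (Finset.range v).powersetCard t, freq A T ≤ m}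

/-!
List the points so that point `i < v` occurs `i` times, the copies of each point
consecutive; the list has `C(v,2) = k * b` entries. Dealing the entries cyclically into `b` blocks puts
exactly `k` entries into each block, and since `v - 1 ≤ b` (from `2k ≤ v`) the `i ≤ b`
consecutive copies of a point land in `i` distinct blocks. So every block is a `k`-set and
point `i` has frequency `i`. Conversely, `v` distinct frequencies cannot all lie below `v - 1`.
-/

lemma eq_of_add_mod_eq {b c j₁ j₂ : ℕ} (h₁ : j₁ < b) (h₂ : j₂ < b)
    (h : (c + j₁) % b = (c + j₂) % b) : j₁ = j₂ := by
  have := Nat.ModEq.add_left_cancel' c h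
  rwa [Nat.ModEq, Nat.mod_eq_of_lt h₁, Nat.mod_eq_of_lt h₂] at this

lemma card_filter_mod_eq_range_mul {k b r : ℕ} (hr : r < b) :
    #{p ∈ range (k * b) | p % b = r} = k := by
  have hb : 0 < b := (Nat.zero_le r).trans_lt hr
  have : {p ∈ range (k * b) | p % b = r} = (range k).image (· * b + r) := by
    ext p
    simp only [mem_filter, mem_range, mem_image]
    constructor
    · rintro ⟨hp, rfl⟩
      exact ⟨p / b, Nat.div_lt_of_lt_mul (by rwa [mul_comm]), Nat.div_add_mod' p b⟩
    · rintro ⟨j, hj, rfl⟩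
      exact ⟨by nlinarith, by simp [Nat.mod_eq_of_lt hr]⟩
  rw [this, card_image_of_injective _ fun j₁ j₂ h => ?_, card_range]
  simpa [hb.ne'] using h

lemma choose_two_succ (i : ℕ) : (i + 1).choose 2 = i.choose 2 + i := by
  simp [Nat.choose_succ_succ', add_comm]

lemma choose_two_add_lt {i i' j j' : ℕ} (hj : j < i) (hi : i < i') :
    i.choose 2 + j < i'.choose 2 + j' := by
  have := Nat.choose_le_choose 2 (Nat.succ_le_of_lt hi)
  rw [choose_two_succ] at this
  omega

/-- Slot `⟨i, j⟩` is the `j`-th copy of point `i`; `slotIndex` numbers the slots point by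
point, so the copies of `i` occupy the interval `[C(i,2), C(i+1,2))`. -/
def slots (v : ℕ) : Finset (Σ _ : ℕ, ℕ) := (range v).sigma range

def slotIndex (s : Σ _ : ℕ, ℕ) : ℕ := s.1.choose 2 + s.2

lemma mem_slots {v : ℕ} {s : Σ _ : ℕ, ℕ} : s ∈ slots v ↔ s.1 < v ∧ s.2 < s.1 := by
  simp [slots]

lemma card_slots (v : ℕ) : #(slots v) = v.choose 2 := by
  simp only [slots, card_sigma, card_range, sum_range_id, Nat.choose_two_right]

lemma slotIndex_injOn (v : ℕ) : Set.InjOn slotIndex (slots v) := by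
  rintro ⟨i, j⟩ hs ⟨i', j'⟩ hs' h
  simp only [mem_coe, mem_slots, slotIndex] at hs hs' h
  obtain rfl : i = i' := by
    rcases lt_trichotomy i i' with hi | rfl | hi
    · exact absurd h (choose_two_add_lt hs.2 hi).ne
    · rfl
    · exact absurd h (choose_two_add_lt hs'.2 hi).ne'
  obtain rfl : j = j' := by omega
  rfl

lemma image_slotIndex_slots (v : ℕ) : (slots v).image slotIndex = range (v.choose 2) := by
  refine eq_of_subset_of_card_le (fun p hp => ?_) ?_
  · obtain ⟨⟨i, j⟩, hs, rfl⟩ := mem_image.mp hp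
    simp only [mem_slots] at hs
    have := Nat.choose_le_choose 2 (Nat.succ_le_of_lt hs.1)
    rw [choose_two_succ] at this
    exact mem_range.mpr (by simp only [slotIndex]; omega)
  · rw [card_image_of_injOn (slotIndex_injOn v), card_slots, card_range]

def block (b v r : ℕ) : Finset ℕ := {s ∈ slots v | slotIndex s % b = r}.image Sigma.fst

def cyclicDesign (b v : ℕ) : Multiset (Finset ℕ) := (Multiset.range b).map (block b v)

lemma mem_block {b v r x : ℕ} : x ∈ block b v r ↔ x < v ∧ ∃ j < x, (x.choose 2 + j) % b = r := by
  simp only [block, mem_image, mem_filter, mem_slots, Sigma.exists]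
  constructor
  · rintro ⟨_, j, ⟨⟨hx, hj⟩, h⟩, rfl⟩
    exact ⟨hx, j, hj, h⟩
  · rintro ⟨hx, j, hj, h⟩
    exact ⟨x, j, ⟨⟨hx, hj⟩, h⟩, rfl⟩

lemma card_block {k b v r : ℕ} (hvb : v ≤ b + 1) (h : v.choose 2 = k * b) (hr : r < b) :
    #(block b v r) = k := by
  rw [block, card_image_of_injOn,
    ← card_image_of_injOn ((slotIndex_injOn v).mono (filter_subset _ _)),
    ← filter_image (p := (· % b = r)), image_slotIndex_slots, h, card_filter_mod_eq_range_mul hr]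
  rintro ⟨i, j⟩ hs ⟨i', j'⟩ hs' (rfl : i = i')
  simp only [mem_coe, mem_filter, mem_slots] at hs hs'
  obtain rfl : j = j' := eq_of_add_mod_eq (by omega) (by omega) (hs.2.trans hs'.2.symm)
  rfl

lemma freq_cyclicDesign {b v x : ℕ} (hvb : v ≤ b + 1) (hx : x < v) :
    freq (cyclicDesign b v) {x} = x := by
  have : {r ∈ range b | x ∈ block b v r} = (range x).image (fun j => (x.choose 2 + j) % b) := by
    ext r
    simp only [mem_filter, mem_range, mem_image, mem_block]
    constructor
    · rintro ⟨-, -, h⟩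
      exact h
    · rintro ⟨j, hj, rfl⟩
      exact ⟨Nat.mod_lt _ (by omega), hx, j, hj, rfl⟩
  calc freq (cyclicDesign b v) {x} = #{r ∈ range b | x ∈ block b v r} := by
        simp only [freq, cyclicDesign, singleton_subset_iff, Multiset.filter_map,
          Function.comp_apply, Multiset.card_map]
        rfl
    _ = x := by
        rw [this, card_image_of_injOn, card_range]
        intro j₁ h₁ j₂ h₂ h
        simp only [coe_range, Set.mem_Iio] at h₁ h₂
        exact eq_of_add_mod_eq (by omega) (by omega) h

lemma le_succ_of_choose_two_eq_mul {k b v : ℕ} (hk : 0 < k) (h2k : 2 * k ≤ v)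
    (h : v.choose 2 = k * b) : v ≤ b + 1 := by
  have hv : v * (v - 1) = 2 * (k * b) := by
    rw [← h, Nat.choose_two_right, Nat.mul_div_cancel' (Nat.even_mul_pred_self v).two_dvd]
  have : k * (v - 1) ≤ k * b := by nlinarith [Nat.mul_le_mul_right (v - 1) h2k]
  have := Nat.le_of_mul_le_mul_left this hk
  omega

lemma mem_powersetCard_one_range {v : ℕ} {T : Finset ℕ} :
    T ∈ (range v).powersetCard 1 ↔ ∃ x < v, {x} = T := by
  simp [powersetCard_one]

lemma IsAdesign.freq_singleton_injOn {k v : ℕ} {A : Multiset (Finset ℕ)}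
    (hA : IsAdesign 1 k v A) : Set.InjOn (fun x => freq A {x}) (range v) := fun x hx y hy h =>
  singleton_inj.mp <| hA.2 _ (mem_powersetCard_one_range.mpr ⟨x, mem_range.mp hx, rfl⟩)
    _ (mem_powersetCard_one_range.mpr ⟨y, mem_range.mp hy, rfl⟩) h

lemma IsAdesign.exists_le_freq {k v : ℕ} {A : Multiset (Finset ℕ)} (hA : IsAdesign 1 k v A)
    (hv : 0 < v) : ∃ x ∈ range v, v - 1 ≤ freq A {x} := by
  by_contra! hlt
  obtain ⟨x, hx, y, hy, hne, h⟩ := exists_ne_map_eq_of_card_lt_of_maps_to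
    (t := range (v - 1)) (by simp only [card_range]; omega) (fun x hx => mem_range.mpr (hlt x hx))
  exact hne (hA.freq_singleton_injOn hx hy h)

lemma isAdesign_cyclicDesign {k b v : ℕ} (hvb : v ≤ b + 1) (h : v.choose 2 = k * b) :
    IsAdesign 1 k v (cyclicDesign b v) := by
  refine ⟨fun K hK => ?_, fun T₁ h₁ T₂ h₂ hT => ?_⟩
  · obtain ⟨r, hr, rfl⟩ := Multiset.mem_map.mp hK
    exact ⟨fun x hx => mem_range.mpr (mem_block.mp hx).1,
      card_block hvb h (Multiset.mem_range.mp hr)⟩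
  · obtain ⟨x, hx, rfl⟩ := mem_powersetCard_one_range.mp h₁
    obtain ⟨y, hy, rfl⟩ := mem_powersetCard_one_range.mp h₂
    rw [freq_cyclicDesign hvb hx, freq_cyclicDesign hvb hy] at hT
    rw [hT]

theorem stmt3_general (k v : ℕ) (hk : 1 ≤ k) (h2k : 2 * k ≤ v)
    (hdvd : k ∣ v.choose 2) :
    mu 1 k v = v - 1 ∧
    (∃ A : Multiset (Finset ℕ), IsAdesign 1 k v A ∧
      (Finset.range v).image (fun x => freq A {x}) = Finset.range v) ∧
    (∀ A : Multiset (Finset ℕ), IsAdesign 1 k v A →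
      ∃ x ∈ Finset.range v, v - 1 ≤ freq A {x}) := by
  obtain ⟨b, hb⟩ := hdvd
  have hvb := le_succ_of_choose_two_eq_mul hk h2k hb
  have hA := isAdesign_cyclicDesign hvb hb
  have hfreq : ∀ x ∈ range v, freq (cyclicDesign b v) {x} = x := fun x hx =>
    freq_cyclicDesign hvb (mem_range.mp hx)
  have hlower : ∀ A, IsAdesign 1 k v A → ∃ x ∈ range v, v - 1 ≤ freq A {x} := fun A hA =>
    hA.exists_le_freq (by omega)
  refine ⟨IsLeast.csInf_eq ⟨⟨_, hA, fun T hT => ?_⟩, ?_⟩, ⟨_, hA, ?_⟩, hlower⟩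
  · obtain ⟨x, hx, rfl⟩ := mem_powersetCard_one_range.mp hT
    rw [hfreq x (mem_range.mpr hx)]
    omega
  · rintro m ⟨A, hA, hm⟩
    obtain ⟨x, hx, hle⟩ := hlower A hA
    exact hle.trans (hm _ (mem_powersetCard_one_range.mpr ⟨x, mem_range.mp hx, rfl⟩))
  · rw [image_congr hfreq, image_id']

theorem stmt3 (k v : ℕ) (hk : 1 ≤ k) (hkv : k < v) (h2k : 2 * k ≤ v)
    (hdvd : k ∣ v.choose 2) :
    mu 1 k v = v - 1 ∧
    (∃ A : Multiset (Finset ℕ), IsAdesign 1 k v A ∧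
      (Finset.range v).image (fun x => freq A {x}) = Finset.range v) ∧
    (∀ A : Multiset (Finset ℕ), IsAdesign 1 k v A →
      ∃ x ∈ Finset.range v, v - 1 ≤ freq A {x}) :=
  stmt3_general k v hk h2k hdvd
end

section
/- Let v > k ≥ 1 with 2k ≤ v and k not dividing C(v,2). Then μ(1,k,v) = v. -/
open Finset

/-!
If every point frequency of an `A(1,k,v)` were below `v`, the `v` distinct frequencies would be
exactly `0, …, v - 1`, summing to `C(v,2)`; but the frequencies of a family of `b` blocks of size
`k` sum to `bk`, and `k ∤ C(v,2)`.

Conversely, write `C(v,2) = bk - r` with `0 < r < k` and realise the frequencies `0, …, v` with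
`v - r` left out, which sum to `bk`, by `b` blocks chosen greedily: each block takes every point
of maximal remaining frequency and is filled up with points of positive remaining frequency.
Since `v = 2k` would give `k ∣ C(v,2)`, we have `2k < v`, hence `vk ≤ C(v,2)` and `v ≤ b`, so no
prescribed frequency exceeds the number of blocks.
-/

lemma freq_cons (K : Finset ℕ) (A : Multiset (Finset ℕ)) (T : Finset ℕ) :
    freq (K ::ₘ A) T = (if T ⊆ K then 1 else 0) + freq A T := by
  simp only [freq, Multiset.filter_cons, Multiset.card_add]
  split <;> simp

lemma sum_ite_mem_of_subset {α : Type*} [DecidableEq α] {S X : Finset α} (h : S ⊆ X) :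
    ∑ i ∈ X, (if i ∈ S then 1 else 0) = #S := by
  rw [sum_boole, filter_mem_eq_inter, inter_eq_right.2 h, Nat.cast_id]

lemma sum_freq_singleton {X : Finset ℕ} {k : ℕ} {A : Multiset (Finset ℕ)}
    (hA : ∀ K ∈ A, K ⊆ X ∧ K.card = k) :
    ∑ i ∈ X, freq A {i} = k * Multiset.card A := by
  induction A using Multiset.induction with
  | empty => simp [freq]
  | cons K A ih =>
    obtain ⟨hKX, hKk⟩ := hA K (Multiset.mem_cons_self _ _)
    simp only [freq_cons, singleton_subset_iff, sum_add_distrib, sum_ite_mem_of_subset hKX,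
      ih fun K' hK' => hA K' (Multiset.mem_cons_of_mem hK'), Multiset.card_cons, hKk]
    ring

section Realization

variable {X : Finset ℕ} {d : ℕ → ℕ} {b k : ℕ}

lemma card_filter_eq_succ_le (hsum : ∑ i ∈ X, d i = (b + 1) * k) :
    #{i ∈ X | d i = b + 1} ≤ k := by
  refine Nat.le_of_mul_le_mul_right ?_ b.succ_pos
  calc #{i ∈ X | d i = b + 1} * (b + 1)
      ≤ ∑ i ∈ X with d i = b + 1, d i :=
        card_nsmul_le_sum {i ∈ X | d i = b + 1} d _ fun i hi => (mem_filter.1 hi).2.ge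
    _ ≤ ∑ i ∈ X, d i := sum_le_sum_of_subset (filter_subset _ _)
    _ = k * (b + 1) := by rw [hsum, mul_comm]

lemma le_card_filter_pos (hsum : ∑ i ∈ X, d i = (b + 1) * k) (hle : ∀ i ∈ X, d i ≤ b + 1) :
    k ≤ #{i ∈ X | 0 < d i} := by
  refine Nat.le_of_mul_le_mul_right ?_ b.succ_pos
  calc k * (b + 1) = ∑ i ∈ X, d i := by rw [hsum, mul_comm]
    _ = ∑ i ∈ X with 0 < d i, d i := (sum_filter_of_ne fun i _ h => Nat.pos_of_ne_zero h).symm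
    _ ≤ #{i ∈ X | 0 < d i} * (b + 1) :=
        sum_le_card_nsmul _ _ _ fun i hi => hle i (mem_filter.1 hi).1

lemma exists_block_of_sum_eq (hsum : ∑ i ∈ X, d i = (b + 1) * k) (hle : ∀ i ∈ X, d i ≤ b + 1) :
    ∃ S ⊆ X, #S = k ∧ (∀ i ∈ S, 0 < d i) ∧ ∀ i ∈ X, i ∉ S → d i ≤ b := by
  have hmax_pos : {i ∈ X | d i = b + 1} ⊆ {i ∈ X | 0 < d i} :=
    monotone_filter_right X fun i h => by omega
  obtain ⟨S, hmax, hpos, hS⟩ := exists_subsuperset_card_eq hmax_pos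
    (card_filter_eq_succ_le hsum) (le_card_filter_pos hsum hle)
  refine ⟨S, hpos.trans (filter_subset _ _), hS, fun i hi => (mem_filter.1 (hpos hi)).2,
    fun i hiX hiS => ?_⟩
  have : d i ≠ b + 1 := fun h => hiS (hmax (mem_filter.2 ⟨hiX, h⟩))
  have := hle i hiX
  omega

lemma exists_blocks_freq_eq (hsum : ∑ i ∈ X, d i = b * k) (hle : ∀ i ∈ X, d i ≤ b) :
    ∃ A : Multiset (Finset ℕ), (∀ K ∈ A, K ⊆ X ∧ K.card = k) ∧ ∀ i ∈ X, freq A {i} = d i := by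
  induction b generalizing d with
  | zero =>
    refine ⟨0, by simp, fun i hi => ?_⟩
    rw [zero_mul, sum_eq_zero_iff] at hsum
    simp [freq, hsum i hi]
  | succ b ih =>
    obtain ⟨S, hSX, hS, hSpos, hrest⟩ := exists_block_of_sum_eq hsum hle
    have hSd : ∀ i ∈ X, (if i ∈ S then 1 else 0) ≤ d i := fun i _ => by
      split_ifs with h
      exacts [hSpos i h, Nat.zero_le _]
    obtain ⟨A, hA, hAfreq⟩ := ih (d := fun i => d i - if i ∈ S then 1 else 0)
      (by rw [sum_tsub_distrib X hSd, hsum, sum_ite_mem_of_subset hSX, hS, add_mul, one_mul,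
        Nat.add_sub_cancel])
      (fun i hi => by
        by_cases h : i ∈ S
        · simp only [h, if_true]
          have := hle i hi
          omega
        · simpa [h] using hrest i hi h)
    refine ⟨S ::ₘ A, by simpa [hSX, hS] using hA, fun i hi => ?_⟩
    simp only [freq_cons, singleton_subset_iff, hAfreq i hi]
    have := hSd i hi
    omega

end Realization

lemma forall_mem_powersetCard_one {α : Type*} {s : Finset α} {P : Finset α → Prop} :
    (∀ T ∈ s.powersetCard 1, P T) ↔ ∀ i ∈ s, P {i} := by
  simp [powersetCard_one]

lemma isAdesign_one_iff {k v : ℕ} {A : Multiset (Finset ℕ)} :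
    IsAdesign 1 k v A ↔
      (∀ K ∈ A, K ⊆ range v ∧ K.card = k) ∧ Set.InjOn (fun i => freq A {i}) (range v) := by
  simp only [IsAdesign, forall_mem_powersetCard_one, singleton_inj]
  rfl

lemma sum_range_eq_choose_two_of_injOn {v : ℕ} {f : ℕ → ℕ} (hf : Set.InjOn f (range v))
    (hlt : ∀ i ∈ range v, f i < v) : ∑ i ∈ range v, f i = v.choose 2 := by
  have himage : (range v).image f = range v :=
    eq_of_subset_of_card_le (image_subset_iff.2 fun i hi => mem_range.2 (hlt i hi))
      (card_image_of_injOn hf).ge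
  calc ∑ i ∈ range v, f i = ∑ j ∈ (range v).image f, j := (sum_image (f := fun j => j) hf).symm
    _ = v.choose 2 := by rw [himage, sum_range_id, Nat.choose_two_right]

lemma le_of_isAdesign_one {k v m : ℕ} {A : Multiset (Finset ℕ)} (hndvd : ¬ k ∣ v.choose 2)
    (hA : IsAdesign 1 k v A) (hm : ∀ i ∈ range v, freq A {i} ≤ m) : v ≤ m := by
  rw [isAdesign_one_iff] at hA
  by_contra! hmv
  refine hndvd ⟨Multiset.card A, ?_⟩
  rw [← sum_range_eq_choose_two_of_injOn hA.2 fun i hi => (hm i hi).trans_lt hmv]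
  exact sum_freq_singleton hA.1

def skipFreq (s i : ℕ) : ℕ := if i < s then i else i + 1

lemma skipFreq_injective (s : ℕ) : Function.Injective (skipFreq s) := by
  intro i j h
  simp only [skipFreq] at h
  split_ifs at h <;> omega

lemma skipFreq_le {s v i : ℕ} (hi : i ∈ range v) : skipFreq s i ≤ v := by
  rw [mem_range] at hi
  unfold skipFreq
  split_ifs <;> omega

lemma sum_range_skipFreq (s v : ℕ) :
    ∑ i ∈ range v, skipFreq s i = v.choose 2 + (v - s) := by
  induction v with
  | zero => simp
  | succ v ih =>
    have hchoose : (v + 1).choose 2 = v.choose 2 + v := by simp [Nat.choose_succ_succ', add_comm]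
    rw [sum_range_succ, ih, hchoose, skipFreq]
    split_ifs <;> omega

lemma dvd_choose_two_two_mul (k : ℕ) : k ∣ (2 * k).choose 2 :=
  ⟨2 * k - 1, by rw [Nat.choose_two_right, mul_assoc, Nat.mul_div_cancel_left _ two_pos]⟩

lemma mul_le_choose_two {k v : ℕ} (h : 2 * k + 1 ≤ v) : v * k ≤ v.choose 2 := by
  rw [Nat.choose_two_right, Nat.le_div_iff_mul_le two_pos, mul_assoc]
  exact Nat.mul_le_mul_left v (by omega)

lemma exists_isAdesign_one_freq_le {k v : ℕ} (hk : 1 ≤ k) (h2k : 2 * k ≤ v)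
    (hndvd : ¬ k ∣ v.choose 2) :
    ∃ A, IsAdesign 1 k v A ∧ ∀ i ∈ range v, freq A {i} ≤ v := by
  have hvC : v * k ≤ v.choose 2 := mul_le_choose_two <|
    Nat.lt_of_le_of_ne h2k fun hv => hndvd (hv ▸ dvd_choose_two_two_mul k)
  set C := v.choose 2
  set r := k - C % k
  set b := C / k + 1
  have hCk := Nat.div_add_mod C k
  have hrk : C % k < k := Nat.mod_lt _ hk
  have hbk : C + r = b * k := by
    rw [Nat.succ_mul, Nat.mul_comm (C / k) k]
    omega
  have hsum : ∑ i ∈ range v, skipFreq (v - r) i = b * k := by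
    rw [sum_range_skipFreq, ← hbk]
    omega
  have hvb : v ≤ b := (Nat.lt_of_mul_lt_mul_right (a := k) (by omega)).le
  obtain ⟨A, hA, hAfreq⟩ := exists_blocks_freq_eq hsum fun i hi => (skipFreq_le hi).trans hvb
  refine ⟨A, isAdesign_one_iff.2 ⟨hA, ?_⟩, fun i hi => hAfreq i hi ▸ skipFreq_le hi⟩
  intro i hi j hj hij
  exact skipFreq_injective _ ((hAfreq i hi).symm.trans (hij.trans (hAfreq j hj)))

theorem stmt4_general (k v : ℕ) (hk : 1 ≤ k) (h2k : 2 * k ≤ v)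
    (hndvd : ¬ k ∣ v.choose 2) :
    mu 1 k v = v := by
  obtain ⟨A, hA, hAv⟩ := exists_isAdesign_one_freq_le hk h2k hndvd
  have hv : v ∈ {m | ∃ A, IsAdesign 1 k v A ∧ ∀ T ∈ (range v).powersetCard 1, freq A T ≤ m} :=
    ⟨A, hA, forall_mem_powersetCard_one.2 hAv⟩
  refine le_antisymm (Nat.sInf_le hv) (le_csInf ⟨v, hv⟩ ?_)
  rintro m ⟨A, hA, hm⟩
  exact le_of_isAdesign_one hndvd hA (forall_mem_powersetCard_one.1 hm)

theorem stmt4 (k v : ℕ) (hk : 1 ≤ k) (hkv : k < v) (h2k : 2 * k ≤ v)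
    (hndvd : ¬ k ∣ v.choose 2) :
    mu 1 k v = v :=
  stmt4_general k v hk h2k hndvd
end

section
/- Let f(1) < f(2) < ... < f(v) be nonnegative integers whose sum F is divisible by k, and suppose f(v) ≤ F/k. Then there exists a multiset of b = F/k blocks, each of size exactly k, on the point set {1,...,v}, such that point x has frequency exactly f(x) for each x. -/
/-!
List the multiset of frequencies as a word of length `b * k`, point `x` occupying the `f x`
consecutive positions after those of the points before it, and put position `p` into block
`p % b`. Block `i` then receives the points owning one of the `k` positions `≡ i [MOD b]` below
`b * k`, and since each point owns at most `b` consecutive positions, no two of its positions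
are congruent: blocks have exactly `k` distinct points and `x` lies in exactly `f x` blocks.
-/

open Finset

lemma freq_map_singleton {ι : Type*} (s : Finset ι) (B : ι → Finset ℕ) (x : ℕ) :
    freq (s.val.map B) {x} = #{i ∈ s | x ∈ B i} := by
  simp only [freq, Multiset.filter_map, Multiset.card_map, singleton_subset_iff]
  rfl

lemma card_filter_eq_of_injOn {α β : Type*} [DecidableEq β] {g : α → β} {s : Finset α}
    (hg : Set.InjOn g s) (c : β) :
    #{a ∈ s | g a = c} = if c ∈ s.image g then 1 else 0 := by
  rw [← card_image_of_injOn (hg.mono (filter_subset _ s)), ← filter_image (p := (· = c)),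
    filter_eq']
  split_ifs <;> rfl

namespace BlockDesign

variable (f : ℕ → ℕ)

def partialSum (x : ℕ) : ℕ := ∑ y ∈ Icc 1 x, f y

def slot (x : ℕ) : Finset ℕ := Ico (partialSum f (x - 1)) (partialSum f (x - 1) + f x)

lemma card_slot (x : ℕ) : #(slot f x) = f x := by
  simp [slot]

lemma sum_sum_slot {M : Type*} [AddCommMonoid M] (g : ℕ → M) (n : ℕ) :
    ∑ x ∈ Icc 1 n, ∑ p ∈ slot f x, g p = ∑ p ∈ range (partialSum f n), g p := by
  induction n with
  | zero => simp [partialSum]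
  | succ n ih =>
    have hsucc : partialSum f (n + 1) = partialSum f n + f (n + 1) := sum_Icc_succ_top (by omega) f
    rw [sum_Icc_succ_top (by omega), ih, hsucc, slot, Nat.add_sub_cancel,
      sum_range_add_sum_Ico _ (Nat.le_add_right _ _)]

def block (n b i : ℕ) : Finset ℕ := {x ∈ Icc 1 n | i ∈ (slot f x).image (· % b)}

variable {f} {b : ℕ}

lemma injOn_mod_slot {x : ℕ} (hx : f x ≤ b) : Set.InjOn (· % b) (slot f x) :=
  (Nat.mod_injOn_Ico _ b).mono (coe_subset.mpr (Ico_subset_Ico_right (by omega)))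

lemma card_block {n k i : ℕ} (hsum : partialSum f n = b * k) (hle : ∀ x ∈ Icc 1 n, f x ≤ b)
    (hi : i < b) : #(block f n b i) = k := by
  calc #(block f n b i)
      = ∑ x ∈ Icc 1 n, #{p ∈ slot f x | p % b = i} := by
        rw [block, card_filter]
        exact sum_congr rfl fun x hx => (card_filter_eq_of_injOn (injOn_mod_slot (hle x hx)) i).symm
    _ = #{p ∈ range (b * k) | p ≡ i [MOD b]} := by
        simp only [card_filter, sum_sum_slot, hsum, Nat.ModEq, Nat.mod_eq_of_lt hi]
    _ = k := by
        rw [← Nat.count_eq_card_filter_range, Nat.count_modEq_card _ (by omega)]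
        simp [Nat.pos_of_ne_zero (by omega : b ≠ 0)]

lemma card_filter_mem_block {n x : ℕ} (hx : x ∈ Icc 1 n) (hfx : f x ≤ b) :
    #{i ∈ range b | x ∈ block f n b i} = f x := by
  have hsub : (slot f x).image (· % b) ⊆ range b := by
    intro i hi
    obtain ⟨p, hp, rfl⟩ := mem_image.mp hi
    have : 0 < f x := card_slot f x ▸ card_pos.mpr ⟨p, hp⟩
    exact mem_range.mpr (Nat.mod_lt p (by omega))
  have : {i ∈ range b | x ∈ block f n b i} =
      {i ∈ range b | i ∈ (slot f x).image (· % b)} := by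
    simp only [block, mem_filter, hx, true_and]
  rw [this, filter_mem_eq_inter, inter_eq_right.mpr hsub,
    card_image_of_injOn (injOn_mod_slot hfx), card_slot]

theorem exists_blocks_freq_eq (n k : ℕ) (hsum : ∑ x ∈ Icc 1 n, f x = b * k)
    (hle : ∀ x ∈ Icc 1 n, f x ≤ b) :
    ∃ A : Multiset (Finset ℕ), Multiset.card A = b ∧
      (∀ K ∈ A, K ⊆ Icc 1 n ∧ K.card = k) ∧ ∀ x ∈ Icc 1 n, freq A {x} = f x := by
  refine ⟨(range b).val.map (block f n b), by simp, ?_, fun x hx => ?_⟩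
  · simp only [Multiset.mem_map, mem_val, mem_range, forall_exists_index, and_imp]
    rintro _ i hi rfl
    exact ⟨filter_subset _ _, card_block hsum hle hi⟩
  · rw [freq_map_singleton, card_filter_mem_block hx (hle x hx)]

end BlockDesign

theorem stmt7_general (v k : ℕ) (f : ℕ → ℕ)
    (hmono : ∀ x, 1 ≤ x → x < v → f x < f (x + 1))
    (hdvd : k ∣ ∑ x ∈ Finset.Icc 1 v, f x)
    (hfv : f v ≤ (∑ x ∈ Finset.Icc 1 v, f x) / k) :
    ∃ A : Multiset (Finset ℕ),
      Multiset.card A = (∑ x ∈ Finset.Icc 1 v, f x) / k ∧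
      (∀ K ∈ A, K ⊆ Finset.Icc 1 v ∧ K.card = k) ∧
      ∀ x ∈ Finset.Icc 1 v, freq A {x} = f x := by
  have hmonoOn : MonotoneOn f (Set.Icc 1 v) :=
    monotoneOn_of_le_succ Set.ordConnected_Icc fun a _ ha hsucc => by
      rw [Order.succ_eq_add_one] at hsucc ⊢
      exact (hmono a ha.1 (by simp only [Set.mem_Icc] at hsucc; omega)).le
  have hle : ∀ x ∈ Icc 1 v, f x ≤ (∑ x ∈ Icc 1 v, f x) / k := fun x hx => by
    obtain ⟨h1x, hxv⟩ := mem_Icc.mp hx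
    exact (hmonoOn ⟨h1x, hxv⟩ ⟨h1x.trans hxv, le_rfl⟩ hxv).trans hfv
  exact BlockDesign.exists_blocks_freq_eq v k (Nat.div_mul_cancel hdvd).symm hle

theorem stmt7 (v k : ℕ) (hv : 1 ≤ v) (hk : 1 ≤ k) (f : ℕ → ℕ)
    (hmono : ∀ x, 1 ≤ x → x < v → f x < f (x + 1))
    (hdvd : k ∣ ∑ x ∈ Finset.Icc 1 v, f x)
    (hfv : f v ≤ (∑ x ∈ Finset.Icc 1 v, f x) / k) :
    ∃ A : Multiset (Finset ℕ),
      Multiset.card A = (∑ x ∈ Finset.Icc 1 v, f x) / k ∧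
      (∀ K ∈ A, K ⊆ Finset.Icc 1 v ∧ K.card = k) ∧
      ∀ x ∈ Finset.Icc 1 v, freq A {x} = f x :=
  stmt7_general v k f hmono hdvd hfv
end

section
/- Let V ⊆ ℤ be a Sidon set of order t (B_t-set) of size v, and let t ≤ k < v. Assign to each k-subset K of V the multiplicity f(K) = Σ_{m ∈ V∖K} m. Then for every t-subset T of V, the resulting frequency of T equals C(v−t−1, k−t) · Σ_{m ∈ V∖T} m, and all these frequencies over distinct t-subsets T are pairwise distinct. -/
/-!
Swapping the order of summation, the frequency of `T` adds up each `m ∈ V ∖ T` once for every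
`k`-subset `K ⊇ T` of `V` avoiding `m`, and there are `C(v-t-1, k-t)` of those. So the
frequency of `T` is a fixed positive multiple of `∑_{m ∈ V∖T} m = ∑_{m ∈ V} m - ∑_{m ∈ T} m`,
and distinct frequencies come down to distinct `t`-subset sums, i.e. the Sidon property.
-/

open Finset

/-- A Sidon set of order `t` (`B_t`-set): all `t`-subset sums are distinct. -/
def IsSidon (t : ℕ) (V : Finset ℕ) : Prop :=
  ∀ S ∈ V.powersetCard t, ∀ S' ∈ V.powersetCard t, (∑ m ∈ S, m) = (∑ m ∈ S', m) → S = S'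

/-- The family of all `k`-subsets `K` of `V`, each with multiplicity `∑_{m ∈ V∖K} m`. -/
def cofamily (V : Finset ℕ) (k : ℕ) : Multiset (Finset ℕ) :=
  (V.powersetCard k).val.bind (fun K => Multiset.replicate (∑ m ∈ V \ K, m) K)

lemma Multiset.card_filter_replicate {α : Type*} (p : α → Prop) [DecidablePred p] (n : ℕ)
    (a : α) : Multiset.card ((Multiset.replicate n a).filter p) = if p a then n else 0 := by
  split_ifs with h
  · rw [Multiset.filter_eq_self.2 fun b hb => Multiset.eq_of_mem_replicate hb ▸ h,
      Multiset.card_replicate]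
  · rw [Multiset.filter_eq_nil.2 fun b hb => Multiset.eq_of_mem_replicate hb ▸ h,
      Multiset.card_zero]

namespace Finset

variable {α : Type*} [DecidableEq α]

lemma card_filter_powersetCard_subset_notMem {T U : Finset α} {a : α} {k : ℕ}
    (hTU : T ⊆ U) (ha : a ∈ U \ T) (hTk : #T ≤ k) :
    #{K ∈ U.powersetCard k | T ⊆ K ∧ a ∉ K} = (#U - #T - 1).choose (k - #T) := by
  obtain ⟨haU, haT⟩ := mem_sdiff.1 ha
  have hT : T ⊆ U.erase a := subset_erase.2 ⟨hTU, haT⟩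
  have hfilter : {K ∈ U.powersetCard k | T ⊆ K ∧ a ∉ K} =
      {K ∈ (U.erase a).powersetCard k | T ⊆ K} := by
    ext K
    simp only [mem_filter, mem_powersetCard, subset_erase]
    tauto
  rw [hfilter, card_filter_powersetCard_subset T _ k hT hTk, card_erase_of_mem haU,
    Nat.sub_right_comm]

lemma sum_powersetCard_superset_sum_sdiff {M : Type*} [AddCommMonoid M] (f : α → M)
    {T V : Finset α} {k : ℕ} (hTV : T ⊆ V) (hTk : #T ≤ k) :
    ∑ K ∈ V.powersetCard k with T ⊆ K, ∑ m ∈ V \ K, f m =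
      (#V - #T - 1).choose (k - #T) • ∑ m ∈ V \ T, f m := by
  have hsdiff : ∀ K ∈ {K ∈ V.powersetCard k | T ⊆ K},
      ∑ m ∈ V \ K, f m = ∑ m ∈ V \ T, if m ∉ K then f m else 0 := by
    intro K hK
    rw [← sum_filter]
    congr 1
    ext m
    have hTK := (mem_filter.1 hK).2
    simp only [mem_sdiff, mem_filter]
    exact ⟨fun ⟨hmV, hmK⟩ => ⟨⟨hmV, fun hmT => hmK (hTK hmT)⟩, hmK⟩, fun h => ⟨h.1.1, h.2⟩⟩
  rw [sum_congr rfl hsdiff, sum_comm, smul_sum]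
  refine sum_congr rfl fun m hm => ?_
  rw [← sum_filter, sum_const, filter_filter,
    card_filter_powersetCard_subset_notMem hTV hm hTk]

end Finset

lemma freq_cofamily (V T : Finset ℕ) (k : ℕ) :
    freq (cofamily V k) T = ∑ K ∈ V.powersetCard k with T ⊆ K, ∑ m ∈ V \ K, m := by
  rw [freq, cofamily, Multiset.filter_bind, Multiset.card_bind, sum_filter, Finset.sum]
  congr 1
  exact Multiset.map_congr rfl fun K _ => Multiset.card_filter_replicate _ _ _

lemma IsSidon.eq_of_sum_sdiff_eq {t : ℕ} {V T₁ T₂ : Finset ℕ} (hV : IsSidon t V)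
    (hT₁ : T₁ ∈ V.powersetCard t) (hT₂ : T₂ ∈ V.powersetCard t)
    (h : ∑ m ∈ V \ T₁, m = ∑ m ∈ V \ T₂, m) : T₁ = T₂ := by
  have h₁ := sum_sdiff (f := fun m => m) (mem_powersetCard.1 hT₁).1
  have h₂ := sum_sdiff (f := fun m => m) (mem_powersetCard.1 hT₂).1
  exact hV T₁ hT₁ T₂ hT₂ (by omega)

theorem stmt8_general (t k v : ℕ) (V : Finset ℕ) (hV : V.card = v)
    (hsidon : IsSidon t V) (htk : t ≤ k) (hkv : k < v) :
    (∀ T ∈ V.powersetCard t,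
      freq (cofamily V k) T = (v - t - 1).choose (k - t) * ∑ m ∈ V \ T, m) ∧
    ∀ T₁ ∈ V.powersetCard t, ∀ T₂ ∈ V.powersetCard t,
      freq (cofamily V k) T₁ = freq (cofamily V k) T₂ → T₁ = T₂ := by
  have hfreq : ∀ T ∈ V.powersetCard t,
      freq (cofamily V k) T = (v - t - 1).choose (k - t) * ∑ m ∈ V \ T, m := by
    intro T hT
    obtain ⟨hTV, hTt⟩ := mem_powersetCard.1 hT
    rw [freq_cofamily, sum_powersetCard_superset_sum_sdiff _ hTV (hTt ▸ htk), hV, hTt,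
      smul_eq_mul]
  refine ⟨hfreq, fun T₁ hT₁ T₂ hT₂ h => hsidon.eq_of_sum_sdiff_eq hT₁ hT₂ ?_⟩
  have hchoose : 0 < (v - t - 1).choose (k - t) := Nat.choose_pos (by omega)
  rw [hfreq T₁ hT₁, hfreq T₂ hT₂] at h
  exact Nat.eq_of_mul_eq_mul_left hchoose h

theorem stmt8 (t k v : ℕ) (V : Finset ℕ) (hV : V.card = v)
    (hsidon : IsSidon t V) (ht : 1 ≤ t) (htk : t ≤ k) (hkv : k < v) :
    (∀ T ∈ V.powersetCard t,
      freq (cofamily V k) T = (v - t - 1).choose (k - t) * ∑ m ∈ V \ T, m) ∧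
    ∀ T₁ ∈ V.powersetCard t, ∀ T₂ ∈ V.powersetCard t,
      freq (cofamily V k) T₁ = freq (cofamily V k) T₂ → T₁ = T₂ :=
  stmt8_general t k v V hV hsidon htk hkv
end

section
/- If for each x in a v-element set V there is a multiplicity f(x), and the multiset consists of the co-singletons V∖{x} with multiplicity f(x), then the frequency of a t-subset T equals Σ_{x ∉ T} f(x). If the f(x) form a Sidon set of order t, these frequencies are pairwise distinct over t-subsets, yielding a t-adesign A(t, v−1, v). -/
/-! A co-singleton `V ∖ {x}` contains a subset `T ⊆ V` exactly when `x ∉ T`, so the frequency of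
`T` is `∑_{V ∖ T} f = ∑_V f - ∑_T f`. Distinct `t`-subset sums of `f` therefore give distinct
frequencies. -/

open Finset

/-- The multiset consisting of each co-singleton `V ∖ {x}` with multiplicity `f x`. -/
def cosingle (V : Finset ℕ) (f : ℕ → ℕ) : Multiset (Finset ℕ) :=
  V.val.bind (fun x => Multiset.replicate (f x) (V.erase x))

lemma freq_bind {α : Type*} (s : Multiset α) (g : α → Multiset (Finset ℕ)) (T : Finset ℕ) :
    freq (s.bind g) T = (s.map fun a => freq (g a) T).sum := by
  simp only [freq, Multiset.filter_bind, Multiset.card_bind, Function.comp_def]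

lemma freq_replicate (n : ℕ) (K T : Finset ℕ) :
    freq (Multiset.replicate n K) T = if T ⊆ K then n else 0 := by
  unfold freq
  split_ifs with h
  · rw [Multiset.filter_eq_self.mpr fun _ hb => Multiset.eq_of_mem_replicate hb ▸ h,
      Multiset.card_replicate]
  · rw [Multiset.filter_eq_nil.mpr fun _ hb => Multiset.eq_of_mem_replicate hb ▸ h,
      Multiset.card_zero]

lemma freq_cosingle (V : Finset ℕ) (f : ℕ → ℕ) {T : Finset ℕ} (hT : T ⊆ V) :
    freq (cosingle V f) T = ∑ x ∈ V \ T, f x := by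
  have hcontains : ∀ x, T ⊆ V.erase x ↔ x ∉ T := by simp [subset_erase, hT]
  rw [cosingle, freq_bind]
  simp only [freq_replicate, hcontains]
  rw [sdiff_eq_filter, sum_filter]
  rfl

lemma subset_and_card_eq_of_mem_cosingle {V : Finset ℕ} {f : ℕ → ℕ} {K : Finset ℕ}
    (hK : K ∈ cosingle V f) :
    K ⊆ V ∧ K.card = V.card - 1 := by
  obtain ⟨x, hx, hKx⟩ := Multiset.mem_bind.mp hK
  rw [Multiset.eq_of_mem_replicate hKx]
  exact ⟨erase_subset x V, card_erase_of_mem hx⟩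

lemma Finset.sum_sdiff_eq_sum_sdiff_iff_of_subset {α M : Type*} [DecidableEq α]
    [AddCancelCommMonoid M] {V T₁ T₂ : Finset α} (f : α → M) (h₁ : T₁ ⊆ V) (h₂ : T₂ ⊆ V) :
    ∑ x ∈ V \ T₁, f x = ∑ x ∈ V \ T₂, f x ↔ ∑ x ∈ T₁, f x = ∑ x ∈ T₂, f x := by
  have htotal := (sum_sdiff h₁ (f := f)).trans (sum_sdiff h₂ (f := f)).symm
  constructor
  · intro h
    rw [h] at htotal
    exact add_left_cancel htotal
  · intro h
    rw [h] at htotal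
    exact add_right_cancel htotal

theorem stmt10_general (t v : ℕ) (V : Finset ℕ) (hV : V.card = v) (f : ℕ → ℕ) :
    (∀ T ∈ V.powersetCard t, freq (cosingle V f) T = ∑ x ∈ V \ T, f x) ∧
    ((∀ x ∈ V, 0 < f x) →
      (∀ S ∈ V.powersetCard t, ∀ S' ∈ V.powersetCard t,
        (∑ x ∈ S, f x) = (∑ x ∈ S', f x) → S = S') →
      (∀ K ∈ cosingle V f, K ⊆ V ∧ K.card = v - 1) ∧
      ∀ T₁ ∈ V.powersetCard t, ∀ T₂ ∈ V.powersetCard t,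
        freq (cosingle V f) T₁ = freq (cosingle V f) T₂ → T₁ = T₂) := by
  refine ⟨fun T hT => freq_cosingle V f (mem_powersetCard.mp hT).1,
    fun _ hSidon => ⟨fun K hK => hV ▸ subset_and_card_eq_of_mem_cosingle hK, ?_⟩⟩
  intro T₁ hT₁ T₂ hT₂ hfreq
  have hsub₁ := (mem_powersetCard.mp hT₁).1
  have hsub₂ := (mem_powersetCard.mp hT₂).1
  rw [freq_cosingle V f hsub₁, freq_cosingle V f hsub₂,
    sum_sdiff_eq_sum_sdiff_iff_of_subset f hsub₁ hsub₂] at hfreq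
  exact hSidon T₁ hT₁ T₂ hT₂ hfreq

theorem stmt10 (t v : ℕ) (V : Finset ℕ) (hV : V.card = v) (f : ℕ → ℕ)
    (ht : 1 ≤ t) (htv : t < v) :
    (∀ T ∈ V.powersetCard t, freq (cosingle V f) T = ∑ x ∈ V \ T, f x) ∧
    ((∀ x ∈ V, 0 < f x) →
      (∀ S ∈ V.powersetCard t, ∀ S' ∈ V.powersetCard t,
        (∑ x ∈ S, f x) = (∑ x ∈ S', f x) → S = S') →
      (∀ K ∈ cosingle V f, K ⊆ V ∧ K.card = v - 1) ∧
      ∀ T₁ ∈ V.powersetCard t, ∀ T₂ ∈ V.powersetCard t,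
        freq (cosingle V f) T₁ = freq (cosingle V f) T₂ → T₁ = T₂) :=
  stmt10_general t v V hV f
end

section
/- For each fixed k ≥ 3, there exists a constant C = C(k) such that for all sufficiently large v, μ(2,k,v) ≤ C v², assuming (i) a PBD(v, {k+1,k+2,k+3}) exists for all sufficiently large v and (ii) finite values m = max{μ(2,k,k+j) : j=1,2,3} and l = max{λ_min(k+j,k) : j=1,2,3} exist. -/
open Finset

/-- A pairwise balanced design on point set `{0,...,v-1}`: every pair of distinct
points lies in exactly one block. -/
def IsPBD (v : ℕ) (B : Multiset (Finset ℕ)) : Prop :=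
  (∀ K ∈ B, K ⊆ Finset.range v) ∧
  ∀ T ∈ (Finset.range v).powersetCard 2, freq B T = 1

/-- An `S_l(2,k,u)`: a multiset of `k`-subsets of `{0,...,u-1}` in which every
pair of points has frequency exactly `l`. -/
def IsDesign (l k u : ℕ) (D : Multiset (Finset ℕ)) : Prop :=
  (∀ K ∈ D, K ⊆ Finset.range u ∧ K.card = k) ∧
  ∀ T ∈ (Finset.range u).powersetCard 2, freq D T = l

/-!
Enumerate the blocks `B₀, …, B_{b-1}` of a PBD on `v` points. On `Bᵢ` place a copy of an
`A(2,k,|Bᵢ|)` with frequencies at most `m`, together with `i (m + 1)` copies of an `S_L(2,k,|Bᵢ|)`,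
where `L` is a common index for the three block sizes. A pair lies in exactly one block `Bᵢ`, and
its frequency is `a + i (m + 1) L` with `a ≤ m < (m + 1) L` its frequency in the adesign on `Bᵢ`;
so the frequency determines `i` and then `a`, and the union is an adesign. As `b ≤ C(v,2) ≤ v²`,
all frequencies are at most `m + v² (m + 1) L`.
-/

lemma Multiset.exists_fin_map_univ {α : Type*} (s : Multiset α) :
    ∃ (b : ℕ) (g : Fin b → α), (Finset.univ : Finset (Fin b)).val.map g = s :=
  ⟨_, s.toList.get, by rw [Fin.univ_val_map, List.ofFn_get, Multiset.coe_toList]⟩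

lemma Finset.forall_mem_powersetCard_map {α β : Type*} (f : α ↪ β) (n : ℕ) (s : Finset α)
    {p : Finset β → Prop} :
    (∀ T ∈ (s.map f).powersetCard n, p T) ↔ ∀ T ∈ s.powersetCard n, p (T.map f) := by
  rw [Finset.powersetCard_map, Finset.forall_mem_map]
  rfl

lemma Nat.eq_and_eq_of_add_mul_eq_add_mul {a b c d N : ℕ} (ha : a < N) (hc : c < N)
    (h : a + b * N = c + d * N) : b = d ∧ a = c := by
  have hN : 0 < N := by omega
  constructor
  · simpa [Nat.add_mul_div_right _ _ hN, Nat.div_eq_of_lt ha, Nat.div_eq_of_lt hc] using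
      congrArg (· / N) h
  · simpa [Nat.mod_eq_of_lt ha, Nat.mod_eq_of_lt hc] using congrArg (· % N) h

lemma freq_eq_countP (A : Multiset (Finset ℕ)) (T : Finset ℕ) :
    freq A T = A.countP (T ⊆ ·) :=
  (Multiset.countP_eq_card_filter _ _).symm

lemma freq_add (A B : Multiset (Finset ℕ)) (T : Finset ℕ) :
    freq (A + B) T = freq A T + freq B T := by
  simp only [freq_eq_countP, Multiset.countP_add]

lemma freq_nsmul (n : ℕ) (A : Multiset (Finset ℕ)) (T : Finset ℕ) :
    freq (n • A) T = n * freq A T := by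
  simp only [freq_eq_countP, Multiset.countP_nsmul]

lemma freq_sum {ι : Type*} (s : Finset ι) (P : ι → Multiset (Finset ℕ)) (T : Finset ℕ) :
    freq (∑ i ∈ s, P i) T = ∑ i ∈ s, freq (P i) T := by
  simp only [freq_eq_countP]
  exact map_sum (Multiset.countPAddMonoidHom (T ⊆ ·)) P s

lemma freq_le_card (A : Multiset (Finset ℕ)) (T : Finset ℕ) : freq A T ≤ Multiset.card A :=
  Multiset.card_le_card (Multiset.filter_le _ _)

lemma freq_map_map (f : ℕ ↪ ℕ) (A : Multiset (Finset ℕ)) (T : Finset ℕ) :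
    freq (A.map (Finset.map f)) (T.map f) = freq A T := by
  simp only [freq_eq_countP, Multiset.countP_map, Finset.map_subset_map,
    ← Multiset.countP_eq_card_filter]

lemma freq_map_univ {ι : Type*} [Fintype ι] (g : ι → Finset ℕ) (T : Finset ℕ) :
    freq ((Finset.univ : Finset ι).val.map g) T = #{i | T ⊆ g i} := by
  rw [freq_eq_countP, Multiset.countP_map]
  rfl

def Finset.enum (K : Finset ℕ) (n : ℕ) : ℕ :=
  if h : n < K.card then K.orderEmbOfFin rfl ⟨n, h⟩ else K.sup id + 1 + n

lemma Finset.enum_mem (K : Finset ℕ) {n : ℕ} (hn : n < K.card) : K.enum n ∈ K := by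
  rw [enum, dif_pos hn]
  exact K.orderEmbOfFin_mem rfl _

lemma Finset.enum_strictMono (K : Finset ℕ) : StrictMono K.enum := by
  refine strictMono_nat_of_lt_succ fun n => ?_
  by_cases hn : n + 1 < K.card
  · rw [enum, dif_pos (by omega), enum, dif_pos hn]
    exact (K.orderEmbOfFin rfl).strictMono (Fin.mk_lt_mk.2 n.lt_succ_self)
  · have hsucc : K.enum (n + 1) = K.sup id + 1 + (n + 1) := by rw [enum, dif_neg hn]
    by_cases hn' : n < K.card
    · have : K.enum n ≤ K.sup id := Finset.le_sup (f := id) (K.enum_mem hn')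
      omega
    · rw [hsucc, enum, dif_neg hn']
      omega

def Finset.enumEmb (K : Finset ℕ) : ℕ ↪ ℕ :=
  ⟨K.enum, K.enum_strictMono.injective⟩

lemma Finset.map_enumEmb_range (K : Finset ℕ) : (range K.card).map K.enumEmb = K := by
  refine Finset.eq_of_subset_of_card_le (fun x hx => ?_) (by simp)
  obtain ⟨n, hn, rfl⟩ := Finset.mem_map.1 hx
  exact K.enum_mem (Finset.mem_range.1 hn)

def IsUniformOn (P : Finset ℕ) (k : ℕ) (A : Multiset (Finset ℕ)) : Prop :=
  ∀ K ∈ A, K ⊆ P ∧ K.card = k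

def IsAdesignOn (P : Finset ℕ) (t k : ℕ) (A : Multiset (Finset ℕ)) : Prop :=
  IsUniformOn P k A ∧ Set.InjOn (freq A) (P.powersetCard t)

def IsDesignOn (P : Finset ℕ) (l k : ℕ) (D : Multiset (Finset ℕ)) : Prop :=
  IsUniformOn P k D ∧ ∀ T ∈ P.powersetCard 2, freq D T = l

lemma isAdesignOn_range_iff {t k v : ℕ} {A : Multiset (Finset ℕ)} :
    IsAdesignOn (range v) t k A ↔ IsAdesign t k v A :=
  Iff.rfl

lemma isDesignOn_range_iff {l k u : ℕ} {D : Multiset (Finset ℕ)} :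
    IsDesignOn (range u) l k D ↔ IsDesign l k u D :=
  Iff.rfl

section Relabel

variable (f : ℕ ↪ ℕ) {P : Finset ℕ}

lemma IsUniformOn.map {k : ℕ} {A : Multiset (Finset ℕ)} (hA : IsUniformOn P k A) :
    IsUniformOn (P.map f) k (A.map (Finset.map f)) := by
  intro K hK
  obtain ⟨S, hS, rfl⟩ := Multiset.mem_map.1 hK
  exact ⟨Finset.map_subset_map.2 (hA S hS).1, by rw [Finset.card_map, (hA S hS).2]⟩

lemma IsAdesignOn.map {t k : ℕ} {A : Multiset (Finset ℕ)} (hA : IsAdesignOn P t k A) :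
    IsAdesignOn (P.map f) t k (A.map (Finset.map f)) := by
  refine ⟨hA.1.map f, (Finset.forall_mem_powersetCard_map f t P).2 fun T₁ hT₁ => ?_⟩
  refine (Finset.forall_mem_powersetCard_map f t P).2 fun T₂ hT₂ h => ?_
  rw [freq_map_map, freq_map_map] at h
  rw [hA.2 hT₁ hT₂ h]

lemma IsDesignOn.map {l k : ℕ} {D : Multiset (Finset ℕ)} (hD : IsDesignOn P l k D) :
    IsDesignOn (P.map f) l k (D.map (Finset.map f)) :=
  ⟨hD.1.map f, (Finset.forall_mem_powersetCard_map f 2 P).2 fun T hT => by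
    rw [freq_map_map, hD.2 T hT]⟩

lemma freq_map_map_le {t m : ℕ} {A : Multiset (Finset ℕ)}
    (hA : ∀ T ∈ P.powersetCard t, freq A T ≤ m) :
    ∀ T ∈ (P.map f).powersetCard t, freq (A.map (Finset.map f)) T ≤ m :=
  (Finset.forall_mem_powersetCard_map f t P).2 fun T hT => by rw [freq_map_map]; exact hA T hT

end Relabel

lemma IsAdesign.exists_isAdesignOn {t k m : ℕ} {K : Finset ℕ} {A : Multiset (Finset ℕ)}
    (hA : IsAdesign t k K.card A) (hAm : ∀ T ∈ (range K.card).powersetCard t, freq A T ≤ m) :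
    ∃ A', IsAdesignOn K t k A' ∧ ∀ T ∈ K.powersetCard t, freq A' T ≤ m := by
  have hA' := (isAdesignOn_range_iff.2 hA).map K.enumEmb
  have hAm' := freq_map_map_le K.enumEmb hAm
  rw [K.map_enumEmb_range] at hA' hAm'
  exact ⟨_, hA', hAm'⟩

lemma IsDesign.exists_isDesignOn {l k : ℕ} {K : Finset ℕ} {D : Multiset (Finset ℕ)}
    (hD : IsDesign l k K.card D) : ∃ D', IsDesignOn K l k D' :=
  ⟨_, K.map_enumEmb_range ▸ (isDesignOn_range_iff.2 hD).map K.enumEmb⟩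

section Gluing

variable {ι : Type*} [Fintype ι] {v : ℕ} {g : ι → Finset ℕ}

lemma freq_sum_eq_of_forall_subset {P : ι → Multiset (Finset ℕ)} (hP : ∀ i, ∀ K ∈ P i, K ⊆ g i)
    {T : Finset ℕ} {i₀ : ι} (h : ∀ i, T ⊆ g i → i = i₀) :
    freq (∑ i, P i) T = freq (P i₀) T := by
  rw [freq_sum, Finset.sum_eq_single i₀ (fun i _ hi => ?_) (by simp)]
  rw [freq_eq_countP, Multiset.countP_eq_zero]
  exact fun K hK hTK => hi (h i (hTK.trans (hP i K hK)))

lemma IsPBD.existsUnique_subset (hB : IsPBD v (univ.val.map g)) {T : Finset ℕ}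
    (hT : T ∈ (range v).powersetCard 2) : ∃! i, T ⊆ g i := by
  have hone := hB.2 T hT
  rw [freq_map_univ, Finset.card_eq_one] at hone
  obtain ⟨i, hi⟩ := hone
  refine ⟨i, ?_, fun j hj => ?_⟩
  · simpa using (Finset.ext_iff.1 hi i).2 (Finset.mem_singleton_self i)
  · simpa using (Finset.ext_iff.1 hi j).1 (by simpa using hj)

lemma IsPBD.card_le_choose {B : Multiset (Finset ℕ)} (hB : IsPBD v B)
    (hB₂ : ∀ K ∈ B, 2 ≤ K.card) : Multiset.card B ≤ v.choose 2 := by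
  obtain ⟨b, g, rfl⟩ := B.exists_fin_map_univ
  have hmem : ∀ i, g i ∈ univ.val.map g := fun i => Multiset.mem_map_of_mem g (Finset.mem_univ i)
  rw [Multiset.card_map, Finset.card_val, ← Finset.card_range v, ← Finset.card_powersetCard]
  refine Finset.card_le_card_of_forall_subsingleton (fun i T => T ⊆ g i) (fun i _ => ?_)
    fun T hT i₁ hi₁ i₂ hi₂ => (hB.existsUnique_subset hT).unique hi₁.2 hi₂.2
  obtain ⟨T, hTg, hT⟩ := Finset.exists_subset_card_eq (hB₂ _ (hmem i))
  exact ⟨T, Finset.mem_powersetCard.2 ⟨hTg.trans (hB.1 _ (hmem i)), hT⟩, hTg⟩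

theorem IsPBD.exists_adesign_freq_le {k m L : ℕ} {B : Multiset (Finset ℕ)} (hB : IsPBD v B)
    (hL : 0 < L)
    (hA : ∀ K ∈ B, ∃ A, IsAdesignOn K 2 k A ∧ ∀ T ∈ K.powersetCard 2, freq A T ≤ m)
    (hD : ∀ K ∈ B, ∃ D, IsDesignOn K L k D) :
    ∃ A, IsAdesign 2 k v A ∧
      ∀ T ∈ (range v).powersetCard 2, freq A T ≤ m + Multiset.card B * ((m + 1) * L) := by
  obtain ⟨b, g, rfl⟩ := B.exists_fin_map_univ
  have hmem : ∀ i, g i ∈ univ.val.map g := fun i => Multiset.mem_map_of_mem g (Finset.mem_univ i)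
  choose Ad hAd hAdm using fun i => hA _ (hmem i)
  choose Dd hDd using fun i => hD _ (hmem i)
  set N := (m + 1) * L
  have hmN : m < N := Nat.lt_of_lt_of_le m.lt_succ_self (Nat.le_mul_of_pos_right _ hL)
  set piece : Fin b → Multiset (Finset ℕ) := fun i => Ad i + ((i : ℕ) * (m + 1)) • Dd i
  have hpiece : ∀ i, IsUniformOn (g i) k (piece i) := fun i K hK => by
    rcases Multiset.mem_add.1 hK with hK | hK
    exacts [(hAd i).1 K hK, (hDd i).1 K (Multiset.mem_nsmul.1 hK).2]
  have hfreq : ∀ T ∈ (range v).powersetCard 2, ∃ i, T ∈ (g i).powersetCard 2 ∧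
      freq (∑ i, piece i) T = freq (Ad i) T + i * N := by
    intro T hT
    obtain ⟨i, hTi, huniq⟩ := hB.existsUnique_subset hT
    have hT' : T ∈ (g i).powersetCard 2 :=
      Finset.mem_powersetCard.2 ⟨hTi, (Finset.mem_powersetCard.1 hT).2⟩
    refine ⟨i, hT', ?_⟩
    rw [freq_sum_eq_of_forall_subset (fun i K hK => (hpiece i K hK).1) huniq, freq_add,
      freq_nsmul, (hDd i).2 T hT']
    ring
  refine ⟨∑ i, piece i, ⟨fun K hK => ?_, fun T₁ hT₁ T₂ hT₂ h => ?_⟩, fun T hT => ?_⟩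
  · obtain ⟨i, -, hKi⟩ := Multiset.mem_sum.1 hK
    exact ⟨(hpiece i K hKi).1.trans (hB.1 _ (hmem i)), (hpiece i K hKi).2⟩
  · obtain ⟨i₁, hT₁i, h₁⟩ := hfreq T₁ hT₁
    obtain ⟨i₂, hT₂i, h₂⟩ := hfreq T₂ hT₂
    rw [h₁, h₂] at h
    obtain ⟨hi, ha⟩ := Nat.eq_and_eq_of_add_mul_eq_add_mul ((hAdm i₁ T₁ hT₁i).trans_lt hmN)
      ((hAdm i₂ T₂ hT₂i).trans_lt hmN) h
    obtain rfl : i₁ = i₂ := Fin.ext hi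
    exact (hAd i₁).2 hT₁i hT₂i ha
  · obtain ⟨i, hTi, h⟩ := hfreq T hT
    rw [h, Multiset.card_map, Finset.card_val, Finset.card_univ, Fintype.card_fin]
    gcongr
    exacts [hAdm i T hTi, i.is_lt.le]

end Gluing

lemma IsDesign.nsmul {l k u : ℕ} {D : Multiset (Finset ℕ)} (hD : IsDesign l k u D) (n : ℕ) :
    IsDesign (n * l) k u (n • D) :=
  ⟨fun K hK => hD.1 K (Multiset.mem_nsmul.1 hK).2, fun T hT => by rw [freq_nsmul, hD.2 T hT]⟩

lemma exists_isDesign_common_index {ι : Type*} (s : Finset ι) {k : ℕ} {u : ι → ℕ}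
    (h : ∀ j ∈ s, ∃ l, 0 < l ∧ ∃ D, IsDesign l k (u j) D) :
    ∃ L, 0 < L ∧ ∀ j ∈ s, ∃ D, IsDesign L k (u j) D := by
  choose! l hl D hD using h
  refine ⟨∏ j ∈ s, l j, Finset.prod_pos hl, fun j hj => ⟨((∏ i ∈ s, l i) / l j) • D j, ?_⟩⟩
  have hDj := (hD j hj).nsmul ((∏ i ∈ s, l i) / l j)
  rwa [Nat.div_mul_cancel (Finset.dvd_prod_of_mem l hj)] at hDj

lemma exists_isAdesign_freq_le {ι : Type*} (s : Finset ι) {t k : ℕ} {u : ι → ℕ}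
    (h : ∀ j ∈ s, ∃ A, IsAdesign t k (u j) A) :
    ∃ m, ∀ j ∈ s, ∃ A, IsAdesign t k (u j) A ∧
      ∀ T ∈ (range (u j)).powersetCard t, freq A T ≤ m := by
  choose! A hA using h
  exact ⟨∑ j ∈ s, Multiset.card (A j), fun j hj => ⟨A j, hA j hj, fun T _ =>
    (freq_le_card _ _).trans
      (Finset.single_le_sum (f := fun i => Multiset.card (A i)) (fun i _ => Nat.zero_le _) hj)⟩⟩

lemma mu_le_of_isAdesign {t k v n : ℕ} {A : Multiset (Finset ℕ)} (hA : IsAdesign t k v A)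
    (hn : ∀ T ∈ (range v).powersetCard t, freq A T ≤ n) : mu t k v ≤ n :=
  Nat.sInf_le ⟨A, hA, hn⟩

theorem stmt16 (k : ℕ) (hk : 3 ≤ k)
    (hPBD : ∃ v₀ : ℕ, ∀ v ≥ v₀, ∃ B : Multiset (Finset ℕ), IsPBD v B ∧
      ∀ K ∈ B, K.card = k + 1 ∨ K.card = k + 2 ∨ K.card = k + 3)
    (hdes : ∀ j ∈ Finset.Icc 1 3, ∃ l, 0 < l ∧ ∃ D, IsDesign l k (k + j) D)
    (hade : ∀ j ∈ Finset.Icc 1 3, ∃ A, IsAdesign 2 k (k + j) A) :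
    ∃ C v₁ : ℕ, ∀ v ≥ v₁, mu 2 k v ≤ C * v ^ 2 := by
  obtain ⟨v₀, hv₀⟩ := hPBD
  obtain ⟨L, hL, hLdes⟩ := exists_isDesign_common_index _ (u := (k + ·)) hdes
  obtain ⟨m, hm⟩ := exists_isAdesign_freq_le _ (u := (k + ·)) hade
  refine ⟨m + (m + 1) * L, max v₀ 1, fun v hv => ?_⟩
  obtain ⟨B, hB, hBsize⟩ := hv₀ v (le_of_max_le_left hv)
  have hsize : ∀ K ∈ B, ∃ j ∈ Finset.Icc 1 3, k + j = K.card := fun K hK =>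
    ⟨K.card - k, by have := hBsize K hK; simp only [Finset.mem_Icc]; omega,
      by have := hBsize K hK; omega⟩
  obtain ⟨A, hA, hAm⟩ := hB.exists_adesign_freq_le hL
    (fun K hK => by
      obtain ⟨j, hj, hjK⟩ := hsize K hK
      obtain ⟨A, hA, hAm⟩ := hm j hj
      exact (hjK ▸ hA).exists_isAdesignOn (hjK ▸ hAm))
    (fun K hK => by
      obtain ⟨j, hj, hjK⟩ := hsize K hK
      obtain ⟨D, hD⟩ := hLdes j hj
      exact (hjK ▸ hD).exists_isDesignOn)
  have hb : Multiset.card B ≤ v ^ 2 :=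
    (hB.card_le_choose fun K hK => by obtain ⟨j, hj, hjK⟩ := hsize K hK; omega).trans
      (Nat.choose_le_pow v 2)
  have hv1 : 1 ≤ v ^ 2 := Nat.one_le_pow _ _ (le_of_max_le_right hv)
  calc mu 2 k v ≤ m + Multiset.card B * ((m + 1) * L) := mu_le_of_isAdesign hA hAm
    _ ≤ m * v ^ 2 + v ^ 2 * ((m + 1) * L) := by gcongr; exact Nat.le_mul_of_pos_right m hv1
    _ = (m + (m + 1) * L) * v ^ 2 := by ring
end
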